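/- arXiv:1210.7053 — 3 statements merged into one kernel-verified Lean document; each statement's English description precedes it below -/
import Mathlib

section
/- Let f be continuously differentiable and concave on the unit simplex Δ ⊂ ℝ^K, and let C_f be a constant such that f(αx' + (1-α)x) ≥ f(x) + α(x'-x)ᵀ∇f(x) - α²C_f for all x, x' ∈ Δ and α ∈ [0,1]. Then the Frank-Wolfe algorithm (starting from the vertex of Δ with largest f-value, and at each step moving toward the vertex e_{i'} maximizing ∇f(θ_ℓ)_i with exact line search) produces after ℓ iterations a point θ_ℓ satisfying max_{θ∈Δ} f(θ) - f(θ_ℓ) ≤ 4C_f/(ℓ+3). -/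
open Finset

lemma single_mem_stdSimplex' {K : ℕ} (i : Fin K) :
    (Pi.single i 1 : Fin K → ℝ) ∈ stdSimplex ℝ (Fin K) := by
  constructor
  · intro j
    simp only [Pi.single_apply]
    split <;> norm_num
  · simp [Pi.single_apply]

lemma sum_single_mul {K : ℕ} (i' : Fin K) (v : Fin K → ℝ) :
    ∑ i, (Pi.single i' 1 : Fin K → ℝ) i * v i = v i' := by
  simp [Pi.single_apply, ite_mul]

lemma grad_ineq {K : ℕ} {f : (Fin K → ℝ) → ℝ} {g : (Fin K → ℝ) → Fin K → ℝ}
    (hconc : ConcaveOn ℝ (stdSimplex ℝ (Fin K)) f)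
    (hgrad : ∀ x ∈ stdSimplex ℝ (Fin K),
      HasFDerivAt f (∑ i, g x i • (ContinuousLinearMap.proj i : (Fin K → ℝ) →L[ℝ] ℝ)) x)
    {x y : Fin K → ℝ} (hx : x ∈ stdSimplex ℝ (Fin K)) (hy : y ∈ stdSimplex ℝ (Fin K)) :
    f y - f x ≤ ∑ i, (y i - x i) * g x i := by
  set D := ∑ i, g x i • (ContinuousLinearMap.proj i : (Fin K → ℝ) →L[ℝ] ℝ) with hD
  have hp : HasDerivAt (fun t : ℝ => x + t • (y - x)) (y - x) 0 := by
    simpa using ((hasDerivAt_id (0:ℝ)).smul_const (y - x)).const_add x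
  have hfd : HasFDerivAt f D ((fun t : ℝ => x + t • (y - x)) 0) := by
    simpa using hgrad x hx
  have hφ : HasDerivAt (fun t : ℝ => f (x + t • (y - x))) (D (y - x)) 0 :=
    hfd.comp_hasDerivAt 0 hp
  have hDval : D (y - x) = ∑ i, (y i - x i) * g x i := by
    simp [hD, ContinuousLinearMap.sum_apply, mul_comm]
  rw [← hDval]
  have hslope : Filter.Tendsto (slope (fun t : ℝ => f (x + t • (y - x))) 0)
      (nhdsWithin 0 (Set.Ioi 0)) (nhds (D (y - x))) :=
    (hasDerivAt_iff_tendsto_slope.1 hφ).mono_left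
      (nhdsWithin_mono _ (fun t ht => by simp only [Set.mem_compl_iff, Set.mem_singleton_iff]; exact ne_of_gt ht))
  refine ge_of_tendsto hslope ?_
  filter_upwards [Ioc_mem_nhdsGT_of_mem (Set.left_mem_Ico.2 one_pos)] with t ht
  have ht0 : (0:ℝ) < t := ht.1
  have ht1 : t ≤ 1 := ht.2
  have hcomb : x + t • (y - x) = (1 - t) • x + t • y := by module
  have hcc : (1 - t) * f x + t * f y ≤ f (x + t • (y - x)) := by
    rw [hcomb]
    simpa using hconc.2 hx hy (by linarith : (0:ℝ) ≤ 1 - t) (le_of_lt ht0) (by ring)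
  rw [slope_def_field]
  simp only [zero_smul, add_zero, sub_zero]
  rw [le_div_iff₀ ht0]
  nlinarith [hcc]

/-- Frank–Wolfe convergence (Clarkson): if `f` is continuously differentiable and
concave on the unit simplex with curvature constant `Cf`, then the Frank–Wolfe
iterates `θ ℓ` satisfy `f θ⋆ - f (θ ℓ) ≤ 4 Cf / (ℓ + 3)` for any `θ⋆` in the simplex. -/
theorem frank_wolfe_convergence {K : ℕ} (hK : 0 < K)
    (f : (Fin K → ℝ) → ℝ) (g : (Fin K → ℝ) → Fin K → ℝ) (Cf : ℝ)
    (hsmooth : ContDiffOn ℝ 1 f (stdSimplex ℝ (Fin K)))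
    (hconc : ConcaveOn ℝ (stdSimplex ℝ (Fin K)) f)
    (hgrad : ∀ x ∈ stdSimplex ℝ (Fin K),
      HasFDerivAt f (∑ i, g x i • (ContinuousLinearMap.proj i : (Fin K → ℝ) →L[ℝ] ℝ)) x)
    (hCf : ∀ x ∈ stdSimplex ℝ (Fin K), ∀ x' ∈ stdSimplex ℝ (Fin K), ∀ α ∈ Set.Icc (0:ℝ) 1,
      f x + α * (∑ i, (x' i - x i) * g x i) - α ^ 2 * Cf ≤ f (α • x' + (1 - α) • x))
    (θ : ℕ → Fin K → ℝ)
    (hθ0 : ∃ i0 : Fin K, θ 0 = Pi.single i0 1 ∧ ∀ i : Fin K, f (Pi.single i 1) ≤ f (Pi.single i0 1))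
    (hstep : ∀ ℓ : ℕ, ∃ i' : Fin K,
      (∀ i : Fin K, g (θ ℓ) i ≤ g (θ ℓ) i') ∧
      ∃ α' ∈ Set.Icc (0:ℝ) 1,
        (∀ α ∈ Set.Icc (0:ℝ) 1,
          f (α • (Pi.single i' 1 : Fin K → ℝ) + (1 - α) • θ ℓ) ≤ f (α' • (Pi.single i' 1 : Fin K → ℝ) + (1 - α') • θ ℓ)) ∧
        θ (ℓ + 1) = α' • (Pi.single i' 1 : Fin K → ℝ) + (1 - α') • θ ℓ) :
    ∀ ℓ : ℕ, ∀ θstar ∈ stdSimplex ℝ (Fin K),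
      f θstar - f (θ ℓ) ≤ 4 * Cf / (ℓ + 3) := by
  classical
  obtain ⟨i0, hθ0eq, hbest⟩ := hθ0
  have hmem : ∀ ℓ, θ ℓ ∈ stdSimplex ℝ (Fin K) := by
    intro ℓ
    induction ℓ with
    | zero => rw [hθ0eq]; exact single_mem_stdSimplex' i0
    | succ n ih =>
      obtain ⟨i', hmax, α', hα', hls, heq⟩ := hstep n
      rw [heq]
      exact (convex_stdSimplex ℝ (Fin K)) (single_mem_stdSimplex' i') ih hα'.1
        (by linarith [hα'.2]) (by ring)
  have hCf0 : 0 ≤ Cf := by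
    have hx0 : (Pi.single (⟨0, hK⟩ : Fin K) 1 : Fin K → ℝ) ∈ stdSimplex ℝ (Fin K) :=
      single_mem_stdSimplex' _
    have h := hCf _ hx0 _ hx0 1 ⟨zero_le_one, le_refl 1⟩
    simp at h
    linarith
  -- duality gap bound
  have hgap : ∀ x ∈ stdSimplex ℝ (Fin K), ∀ i' : Fin K, (∀ i, g x i ≤ g x i') →
      ∀ θs ∈ stdSimplex ℝ (Fin K),
      f θs - f x ≤ ∑ i, ((Pi.single i' 1 : Fin K → ℝ) i - x i) * g x i := by
    intro x hx i' hmax θs hθs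
    have h1 := grad_ineq hconc hgrad hx hθs
    have h2 : ∑ i, θs i * g x i ≤ ∑ i, (Pi.single i' 1 : Fin K → ℝ) i * g x i := by
      rw [sum_single_mul]
      calc ∑ i, θs i * g x i ≤ ∑ i, θs i * g x i' :=
            Finset.sum_le_sum (fun i _ => mul_le_mul_of_nonneg_left (hmax i) (hθs.1 i))
        _ = g x i' := by rw [← Finset.sum_mul, hθs.2, one_mul]
    have h3 : ∑ i, (θs i - x i) * g x i ≤ ∑ i, ((Pi.single i' 1 : Fin K → ℝ) i - x i) * g x i := by
      simp only [sub_mul, Finset.sum_sub_distrib]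
      exact sub_le_sub_right h2 _
    linarith
  intro ℓ
  induction ℓ with
  | zero =>
    intro θs hθs
    obtain ⟨i', -, hmaxi⟩ := Finset.exists_max_image Finset.univ (g θs)
      ⟨⟨0, hK⟩, Finset.mem_univ _⟩
    have hkey := hCf θs hθs _ (single_mem_stdSimplex' i') 1 ⟨zero_le_one, le_refl 1⟩
    simp only [one_smul, sub_self, zero_smul, add_zero, one_mul, one_pow] at hkey
    have hsum : 0 ≤ ∑ i, ((Pi.single i' 1 : Fin K → ℝ) i - θs i) * g θs i := by
      simp only [sub_mul, Finset.sum_sub_distrib, sum_single_mul]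
      have : ∑ i, θs i * g θs i ≤ g θs i' := by
        calc ∑ i, θs i * g θs i ≤ ∑ i, θs i * g θs i' :=
              Finset.sum_le_sum (fun i _ =>
                mul_le_mul_of_nonneg_left (hmaxi i (Finset.mem_univ i)) (hθs.1 i))
          _ = g θs i' := by rw [← Finset.sum_mul, hθs.2, one_mul]
      linarith
    have hle : f θs - Cf ≤ f (Pi.single i' 1) := by nlinarith [hkey]
    have hbest' : f (Pi.single i' 1) ≤ f (θ 0) := by rw [hθ0eq]; exact hbest i'
    have : f θs - f (θ 0) ≤ Cf := by linarith
    have hc : 4 * Cf / (((0:ℕ):ℝ) + 3) = 4 * Cf / 3 := by norm_num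
    rw [hc]
    linarith [this, hCf0]
  | succ n ih =>
    intro θs hθs
    obtain ⟨i', hmax, α', hα', hls, heq⟩ := hstep n
    have hxmem := hmem n
    have hgapn := hgap (θ n) hxmem i' hmax θs hθs
    set G := ∑ i, ((Pi.single i' 1 : Fin K → ℝ) i - θ n i) * g (θ n) i with hG
    have hn0 : (0:ℝ) ≤ (n:ℝ) := Nat.cast_nonneg n
    have hn4 : (0:ℝ) < (n:ℝ) + 4 := by positivity
    set a : ℝ := 2 / ((n:ℝ) + 4) with ha
    have haI : a ∈ Set.Icc (0:ℝ) 1 :=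
      ⟨by positivity, by rw [ha, div_le_one hn4]; linarith⟩
    have hdesc : f (θ n) + a * G - a ^ 2 * Cf ≤ f (θ (n+1)) := by
      have h1 := hCf (θ n) hxmem _ (single_mem_stdSimplex' i') a haI
      have h2 := hls a haI
      rw [heq]
      linarith
    have ihn := ih θs hθs
    have hmul : a * (f θs - f (θ n)) ≤ a * G := mul_le_mul_of_nonneg_left hgapn haI.1
    have hexp : (1 - a) * (f θs - f (θ n)) = (f θs - f (θ n)) - a * (f θs - f (θ n)) := by
      ring
    have hh : f θs - f (θ (n+1)) ≤ (1 - a) * (f θs - f (θ n)) + a ^ 2 * Cf := by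
      rw [hexp]; linarith
    have h1a : (0:ℝ) ≤ 1 - a := by linarith [haI.2]
    have hmul2 : (1 - a) * (f θs - f (θ n)) ≤ (1 - a) * (4 * Cf / ((n:ℝ) + 3)) :=
      mul_le_mul_of_nonneg_left ihn h1a
    have hn3 : (0:ℝ) < (n:ℝ) + 3 := by positivity
    have harith : (1 - a) * (4 * Cf / ((n:ℝ) + 3)) + a ^ 2 * Cf ≤ 4 * Cf / ((n:ℝ) + 4) := by
      rw [ha, ← sub_nonneg]
      have hid : 4 * Cf / ((n:ℝ) + 4) -
          ((1 - 2 / ((n:ℝ) + 4)) * (4 * Cf / ((n:ℝ) + 3)) + (2 / ((n:ℝ) + 4)) ^ 2 * Cf)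
          = 4 * Cf / (((n:ℝ) + 3) * ((n:ℝ) + 4) ^ 2) := by
        field_simp
        ring
      rw [hid]
      exact div_nonneg (by linarith) (by positivity)
    have hcast : ((n+1 : ℕ) : ℝ) + 3 = (n:ℝ) + 4 := by push_cast; ring
    rw [hcast]
    linarith
end

section
/- Let Σ^{-1} be a symmetric positive-definite K×K matrix with nonnegative entries. Then the function y(θ) = -½ (log θ)ᵀ Σ^{-1} (log θ) is concave on the interior of the unit simplex Δ ⊂ ℝ^K. -/
open Finset Matrix

/-!
Write `y = -½ q ∘ log` with `q x = xᵀ A x`. Since `A` is positive semidefinite, `q` is convex;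
since its entries are nonnegative, `q` is antitone on the nonpositive orthant, which contains
`log θ` for every `θ` in the simplex. A convex antitone function of the componentwise concave
map `log` is convex, so `y` is concave.
-/

/-- Unlike `ConvexOn.comp_concaveOn`, this does not need `f '' s` to be convex (the image of the
simplex under `log` is not). -/
theorem ConvexOn.comp_concaveOn_of_mapsTo {𝕜 E F β : Type*} [Semiring 𝕜] [PartialOrder 𝕜]
    [AddCommMonoid E] [AddCommMonoid F] [PartialOrder F] [AddCommMonoid β] [PartialOrder β]
    [SMul 𝕜 E] [Module 𝕜 F] [Module 𝕜 β] {s : Set E} {t : Set F} {f : E → F} {g : F → β}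
    (hg : ConvexOn 𝕜 t g) (hf : ConcaveOn 𝕜 s f) (hg' : AntitoneOn g t)
    (hst : Set.MapsTo f s t) :
    ConvexOn 𝕜 s (g ∘ f) :=
  ⟨hf.1, fun _ hx _ hy _ _ ha hb hab =>
    (hg' (hg.1 (hst hx) (hst hy) ha hb hab) (hst (hf.1 hx hy ha hb hab))
      (hf.2 hx hy ha hb hab)).trans (hg.2 (hst hx) (hst hy) ha hb hab)⟩

theorem ConcaveOn.pi_map {𝕜 ι E β : Type*} [Semiring 𝕜] [PartialOrder 𝕜]
    [AddCommMonoid E] [AddCommMonoid β] [PartialOrder β] [SMul 𝕜 E] [Module 𝕜 β]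
    {t : Set E} {φ : E → β} (hφ : ConcaveOn 𝕜 t φ) :
    ConcaveOn 𝕜 (Set.univ.pi fun _ : ι => t) (fun x i => φ (x i)) :=
  ⟨convex_pi fun _ _ => hφ.1, fun _ hx _ hy _ _ ha hb hab i =>
    hφ.2 (hx i trivial) (hy i trivial) ha hb hab⟩

namespace Matrix

variable {n : Type*} [Fintype n] {A : Matrix n n ℝ}

theorem IsHermitian.dotProduct_mulVec_comm (hA : A.IsHermitian) (u v : n → ℝ) :
    u ⬝ᵥ A *ᵥ v = v ⬝ᵥ A *ᵥ u := by
  rw [dotProduct_comm, dotProduct_mulVec, ← mulVec_transpose,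
    ← conjTranspose_eq_transpose_of_trivial, hA.eq]

theorem PosSemidef.convexOn_dotProduct_mulVec (hA : A.PosSemidef) :
    ConvexOn ℝ Set.univ fun x : n → ℝ => x ⬝ᵥ A *ᵥ x := by
  refine ⟨convex_univ, fun u _ v _ a b ha hb hab => ?_⟩
  have hsymm := hA.isHermitian.dotProduct_mulVec_comm u v
  have hdiff : 0 ≤ (u - v) ⬝ᵥ A *ᵥ (u - v) := by
    simpa using hA.dotProduct_mulVec_nonneg (u - v)
  -- `a q u + b q v - q (a u + b v) = a b q (u - v)` when `a + b = 1`
  obtain rfl : b = 1 - a := by linarith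
  simp only [add_dotProduct, dotProduct_add, smul_dotProduct, dotProduct_smul, mulVec_add,
    mulVec_smul, sub_dotProduct, dotProduct_sub, mulVec_sub, smul_eq_mul] at hdiff ⊢
  nlinarith [mul_nonneg (mul_nonneg ha hb) hdiff]

theorem antitoneOn_dotProduct_mulVec_of_nonneg (hA : ∀ i j, 0 ≤ A i j) :
    AntitoneOn (fun x : n → ℝ => x ⬝ᵥ A *ᵥ x) (Set.Iic 0) := by
  intro x hx y hy hxy
  simp only [dotProduct, mulVec, mul_sum]
  refine sum_le_sum fun i _ => sum_le_sum fun j _ => ?_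
  have hyy : y i * y j ≤ x i * x j := by
    nlinarith [mul_nonneg (sub_nonneg.2 (hxy i)) (neg_nonneg.2 (hx j)),
      mul_nonneg (neg_nonneg.2 (hy i)) (sub_nonneg.2 (hxy j))]
  nlinarith [mul_le_mul_of_nonneg_left hyy (hA i j)]

end Matrix

/-- For `Σ⁻¹ = A` symmetric positive definite with nonnegative entries, the function
`y(θ) = -½ (log θ)ᵀ A (log θ)` is concave on the interior of the unit simplex. -/
theorem ctm_prior_concave {K : ℕ} (A : Matrix (Fin K) (Fin K) ℝ)
    (hA_pd : A.PosDef) (hA_nonneg : ∀ i j, 0 ≤ A i j) :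
    ConcaveOn ℝ {θ : Fin K → ℝ | θ ∈ stdSimplex ℝ (Fin K) ∧ ∀ k, 0 < θ k}
      (fun θ => -(1 / 2) * ((fun i => Real.log (θ i)) ⬝ᵥ A.mulVec fun i => Real.log (θ i))) := by
  set s := {θ : Fin K → ℝ | θ ∈ stdSimplex ℝ (Fin K) ∧ ∀ k, 0 < θ k}
  have hs : s = stdSimplex ℝ (Fin K) ∩ Set.univ.pi fun _ => Set.Ioi 0 := by
    ext θ; simp [s]
  have hlog : ConcaveOn ℝ s fun θ i => Real.log (θ i) := by
    rw [hs]
    exact strictConcaveOn_log_Ioi.concaveOn.pi_map.subset Set.inter_subset_right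
      ((convex_stdSimplex ℝ _).inter (convex_pi fun _ _ => convex_Ioi 0))
  have hlog_nonpos : Set.MapsTo (fun θ i => Real.log (θ i)) s (Set.Iic (0 : Fin K → ℝ)) :=
    fun θ hθ i => Real.log_nonpos (hθ.2 i).le (stdSimplex.le_one ⟨θ, hθ.1⟩ i)
  have hquad : ConvexOn ℝ (Set.Iic 0) fun x : Fin K → ℝ => x ⬝ᵥ A *ᵥ x :=
    hA_pd.posSemidef.convexOn_dotProduct_mulVec.subset (Set.subset_univ _) (convex_Iic 0)
  have hconvex := hquad.comp_concaveOn_of_mapsTo hlog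
    (antitoneOn_dotProduct_mulVec_of_nonneg hA_nonneg) hlog_nonpos
  refine (hconvex.smul (c := (1 / 2 : ℝ)) (by norm_num)).neg.congr fun θ _ => ?_
  simp only [Function.comp_apply, Pi.neg_apply, smul_eq_mul]
  ring
end

section
/- Let θ* be a maximizer over the unit simplex Δ ⊂ ℝ^K of f(θ) = Σ_j d_j log(Σ_k θ_k β_{kj}) - ½ (log θ)ᵀ Σ^{-1} (log θ), where Σ^{-1} is symmetric positive definite with nonnegative entries, β_{kj} > 0, d_j ≥ 0, K ≥ 2, and f is interpreted as -∞ on the boundary of Δ. Then θ* lies in the interior of Δ; in particular θ* has no zero component (optimal CTM topic proportions are not sparse). -/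
open Finset Matrix

/-- Any maximizer over the unit simplex of the CTM MAP objective
`f(θ) = ∑ j d j * log (∑ k θ k β k j) - ½ (log θ)ᵀ Σ⁻¹ (log θ)` (interpreted as `-∞`
on the boundary) lies in the interior of the simplex: it has no zero component. -/
theorem ctm_maximizer_interior {K V : ℕ} (hK : 2 ≤ K)
    (A : Matrix (Fin K) (Fin K) ℝ) (hA_pd : A.PosDef) (hA_nonneg : ∀ i j, 0 ≤ A i j)
    (β : Fin K → Fin V → ℝ) (hβ : ∀ k j, 0 < β k j)
    (d : Fin V → ℝ) (hd : ∀ j, 0 ≤ d j)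
    (f : (Fin K → ℝ) → EReal)
    (hf_int : ∀ θ : Fin K → ℝ, (∀ k, 0 < θ k) →
      f θ = (((∑ j, d j * Real.log (∑ k, θ k * β k j)) -
        (1 / 2) * ((fun i => Real.log (θ i)) ⬝ᵥ A.mulVec fun i => Real.log (θ i)) : ℝ) : EReal))
    (hf_bd : ∀ θ : Fin K → ℝ, ¬ (∀ k, 0 < θ k) → f θ = ⊥)
    (θstar : Fin K → ℝ) (hθstar : θstar ∈ stdSimplex ℝ (Fin K))
    (hmax : ∀ θ ∈ stdSimplex ℝ (Fin K), f θ ≤ f θstar) :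
    ∀ k, 0 < θstar k := by
  intro k
  by_contra hk
  have hbot : f θstar = ⊥ := hf_bd θstar (fun h => hk (h k))
  set u : Fin K → ℝ := fun _ => (K : ℝ)⁻¹ with hu
  have hKpos : (0:ℝ) < K := by positivity
  have hupos : ∀ k, 0 < u k := fun _ => by positivity
  have humem : u ∈ stdSimplex ℝ (Fin K) := by
    constructor
    · intro i; exact (hupos i).le
    · simp [hu, Finset.sum_const, mul_inv_cancel₀ (ne_of_gt hKpos)]
  have := hmax u humem
  rw [hbot, le_bot_iff, hf_int u hupos] at this
  exact (EReal.coe_ne_bot _) this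
end
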